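/- The function arc₁ (length of a circular arc over a unit chord enclosing area x) is strictly convex on [0, π/8) and strictly concave on (π/8, ∞). -/

import Mathlib

/-- `f` is the function `arc₁`: `f x` is the length of the circular arc subtending a
chord of length `1` and enclosing, together with the chord, a region of area `x`. -/
def IsArcOne (f : ℝ → ℝ) : Prop :=
  ContinuousOn f (Set.Ici 0) ∧
  ∀ θ ∈ Set.Ioo 0 Real.pi,
    f ((θ - Real.sin θ * Real.cos θ) / (4 * Real.sin θ ^ 2)) = θ / Real.sin θ

/-!
Parametrise by the half central angle `θ ∈ (0, π)` of the arc: its radius is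
`r = 1 / (2 sin θ)`, its length `θ / sin θ`, and the enclosed area
`A θ = r² (θ - sin θ cos θ)` increases strictly from `0` to `∞`. Differentiating
`arc₁ (A θ) = θ / sin θ` through the inverse of `A` gives `arc₁' x = 2 sin θ(x)`, the
curvature of the arc. Since `θ(π/8) = π/2`, this derivative increases on `(0, π/8)` and
decreases on `(π/8, ∞)`.
-/

open Real Set Filter Topology

lemma sin_sub_mul_cos_pos {θ : ℝ} (hθ : θ ∈ Ioo 0 π) : 0 < sin θ - θ * cos θ := by
  have hsin : 0 < sin θ := sin_pos_of_pos_of_lt_pi hθ.1 hθ.2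
  rcases le_or_gt (cos θ) 0 with hcos | hcos
  · nlinarith [hθ.1]
  · have hθ' : θ < π / 2 := by
      by_contra! h
      exact (cos_nonpos_of_pi_div_two_le_of_le h (by linarith [hθ.2])).not_gt hcos
    have := lt_tan hθ.1 hθ'
    rw [tan_eq_sin_div_cos, lt_div_iff₀ hcos] at this
    linarith

lemma strictAntiOn_sin_Icc_pi_div_two_pi : StrictAntiOn sin (Icc (π / 2) π) := by
  intro a ha b hb hab
  rw [← cos_sub_pi_div_two, ← cos_sub_pi_div_two]
  exact strictAntiOn_cos ⟨by linarith [ha.1], by linarith [ha.2, pi_pos]⟩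
    ⟨by linarith [hb.1], by linarith [hb.2, pi_pos]⟩ (by linarith)

noncomputable def segmentArea (θ : ℝ) : ℝ := (θ - sin θ * cos θ) / (4 * sin θ ^ 2)

lemma hasDerivAt_segmentArea {θ : ℝ} (hθ : θ ∈ Ioo 0 π) :
    HasDerivAt segmentArea ((sin θ - θ * cos θ) / (2 * sin θ ^ 3)) θ := by
  have hsin : 0 < sin θ := sin_pos_of_pos_of_lt_pi hθ.1 hθ.2
  have hnum : HasDerivAt (fun t => t - sin t * cos t)
      (1 - (cos θ * cos θ + sin θ * -sin θ)) θ :=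
    (hasDerivAt_id θ).sub ((hasDerivAt_sin θ).mul (hasDerivAt_cos θ))
  have hden : HasDerivAt (fun t => 4 * sin t ^ 2) (4 * (2 * sin θ ^ 1 * cos θ)) θ :=
    ((hasDerivAt_sin θ).pow 2).const_mul 4
  refine (hnum.div hden (by positivity)).congr_deriv ?_
  field_simp
  linear_combination 2 * sin θ * sin_sq_add_cos_sq θ

lemma segmentArea_pos {θ : ℝ} (hθ : θ ∈ Ioo 0 π) : 0 < segmentArea θ := by
  have hsin : 0 < sin θ := sin_pos_of_pos_of_lt_pi hθ.1 hθ.2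
  have : sin θ * cos θ < θ := by
    nlinarith [sin_lt hθ.1, mul_le_mul_of_nonneg_left (cos_le_one θ) hsin.le]
  exact div_pos (by linarith) (by positivity)

lemma strictMonoOn_segmentArea : StrictMonoOn segmentArea (Ioo 0 π) := by
  refine strictMonoOn_of_deriv_pos (convex_Ioo 0 π)
    (fun θ hθ => (hasDerivAt_segmentArea hθ).continuousAt.continuousWithinAt) fun θ hθ => ?_
  rw [interior_Ioo] at hθ
  have hsin : 0 < sin θ := sin_pos_of_pos_of_lt_pi hθ.1 hθ.2
  rw [(hasDerivAt_segmentArea hθ).deriv]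
  exact div_pos (sin_sub_mul_cos_pos hθ) (by positivity)

lemma segmentArea_le_self {θ : ℝ} (h₀ : 0 < θ) (h₁ : θ ≤ π / 2) :
    segmentArea θ ≤ θ := by
  have hsin : 0 < sin θ := sin_pos_of_pos_of_lt_pi h₀ (by linarith [pi_pos])
  -- `θ - sin θ cos θ = (θ - sin θ) + sin θ (1 - cos θ) ≤ θ³/6 + θ · θ²/2`
  have hnum : θ - sin θ * cos θ ≤ 2 / 3 * θ ^ 3 := by
    nlinarith [sin_ge_sub_cube h₀.le, sin_le h₀.le, one_sub_sq_div_two_le_cos (x := θ),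
      mul_le_mul_of_nonneg_right (sin_le h₀.le) (sub_nonneg.2 (cos_le_one θ))]
  -- `sin θ ≥ 2θ/π` and `π < 4`
  have hden : θ ^ 2 ≤ 4 * sin θ ^ 2 := by
    have h := mul_le_sin h₀.le h₁
    rw [div_mul_eq_mul_div, div_le_iff₀ pi_pos] at h
    nlinarith [mul_le_mul_of_nonneg_left pi_lt_four.le hsin.le]
  rw [segmentArea, div_le_iff₀ (by positivity)]
  nlinarith [pow_pos h₀ 3]

lemma inv_four_mul_le_segmentArea {θ : ℝ} (h₀ : π - 1 ≤ θ) (h₁ : θ < π) :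
    1 / (4 * (π - θ)) ≤ segmentArea θ := by
  have hsin : 0 < sin θ := sin_pos_of_pos_of_lt_pi (by linarith [pi_gt_three]) h₁
  have hsin_le : sin θ ≤ π - θ := by
    rw [← sin_pi_sub]
    exact sin_le (by linarith)
  have hnum : 1 ≤ θ - sin θ * cos θ := by
    nlinarith [sq_nonneg (sin θ - cos θ), sin_sq_add_cos_sq θ, pi_gt_three]
  refine div_le_div₀ (by linarith) hnum (by positivity) ?_
  nlinarith

lemma surjOn_segmentArea : SurjOn segmentArea (Ioo 0 π) (Ioi 0) := by
  intro y (hy : 0 < y)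
  set δ := min 1 (1 / (4 * y))
  have hδ : 0 < δ := lt_min one_pos (by positivity)
  have hsmall : segmentArea (min (π / 2) y) ≤ y :=
    (segmentArea_le_self (lt_min (by positivity) hy) (min_le_left _ _)).trans (min_le_right _ _)
  have hlarge : y ≤ segmentArea (π - δ) := by
    refine le_trans ?_ (inv_four_mul_le_segmentArea (by linarith [min_le_left 1 (1 / (4 * y))])
      (by linarith))
    rw [sub_sub_cancel, le_div_iff₀ (by positivity)]
    nlinarith [mul_le_mul_of_nonneg_left (min_le_right 1 (1 / (4 * y))) hy.le,
      mul_one_div_cancel (by positivity : 4 * y ≠ 0)]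
  have hsub : Icc (min (π / 2) y) (π - δ) ⊆ Ioo 0 π := fun t ht =>
    ⟨(lt_min (by positivity) hy).trans_le ht.1, ht.2.trans_lt (by linarith)⟩
  have hle : min (π / 2) y ≤ π - δ := by
    linarith [min_le_left (π / 2) y, min_le_left 1 (1 / (4 * y)), pi_gt_three]
  obtain ⟨θ, hθ, rfl⟩ := intermediate_value_Icc hle
    (fun t ht => (hasDerivAt_segmentArea (hsub ht)).continuousAt.continuousWithinAt)
    ⟨hsmall, hlarge⟩
  exact ⟨θ, hsub hθ, rfl⟩

lemma bijOn_segmentArea : BijOn segmentArea (Ioo 0 π) (Ioi 0) :=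
  ⟨fun _ hθ => segmentArea_pos hθ, strictMonoOn_segmentArea.injOn, surjOn_segmentArea⟩

noncomputable def segmentHalfAngle : ℝ → ℝ := Function.invFunOn segmentArea (Ioo 0 π)

lemma invOn_segmentHalfAngle : InvOn segmentHalfAngle segmentArea (Ioo 0 π) (Ioi 0) :=
  bijOn_segmentArea.invOn_invFunOn

lemma bijOn_segmentHalfAngle : BijOn segmentHalfAngle (Ioi 0) (Ioo 0 π) :=
  bijOn_segmentArea.symm invOn_segmentHalfAngle.symm

lemma strictMonoOn_segmentHalfAngle : StrictMonoOn segmentHalfAngle (Ioi 0) := by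
  intro x hx y hy hxy
  rw [← strictMonoOn_segmentArea.lt_iff_lt (bijOn_segmentHalfAngle.mapsTo hx)
    (bijOn_segmentHalfAngle.mapsTo hy), invOn_segmentHalfAngle.2 hx, invOn_segmentHalfAngle.2 hy]
  exact hxy

lemma continuousAt_segmentHalfAngle {x : ℝ} (hx : 0 < x) : ContinuousAt segmentHalfAngle x :=
  strictMonoOn_segmentHalfAngle.continuousAt_of_image_mem_nhds (Ioi_mem_nhds hx)
    (bijOn_segmentHalfAngle.image_eq ▸ isOpen_Ioo.mem_nhds (bijOn_segmentHalfAngle.mapsTo hx))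

lemma segmentHalfAngle_pi_div_eight : segmentHalfAngle (π / 8) = π / 2 := by
  have h : segmentArea (π / 2) = π / 8 := by
    rw [segmentArea, sin_pi_div_two, cos_pi_div_two]
    ring
  rw [← h, invOn_segmentHalfAngle.1 ⟨by positivity, by linarith [pi_pos]⟩]

lemma IsArcOne.hasDerivAt {f : ℝ → ℝ} (hf : IsArcOne f) {x : ℝ} (hx : 0 < x) :
    HasDerivAt f (2 * sin (segmentHalfAngle x)) x := by
  set θ := segmentHalfAngle x
  have hθ : θ ∈ Ioo 0 π := bijOn_segmentHalfAngle.mapsTo hx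
  have hsin : 0 < sin θ := sin_pos_of_pos_of_lt_pi hθ.1 hθ.2
  have hnum := sin_sub_mul_cos_pos hθ
  have hangle : HasDerivAt segmentHalfAngle ((sin θ - θ * cos θ) / (2 * sin θ ^ 3))⁻¹ x :=
    (hasDerivAt_segmentArea hθ).of_local_left_inverse (continuousAt_segmentHalfAngle hx)
      (by positivity) (eventually_of_mem (Ioi_mem_nhds hx) fun _ hz => invOn_segmentHalfAngle.2 hz)
  have hlength : HasDerivAt (fun t => t / sin t) ((1 * sin θ - θ * cos θ) / sin θ ^ 2) θ :=
    (hasDerivAt_id θ).div (hasDerivAt_sin θ) hsin.ne'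
  have hf_eq : (fun t => t / sin t) ∘ segmentHalfAngle =ᶠ[𝓝 x] f := by
    filter_upwards [Ioi_mem_nhds hx] with z hz
    rw [Function.comp_apply, ← hf.2 _ (bijOn_segmentHalfAngle.mapsTo hz)]
    exact congrArg f (invOn_segmentHalfAngle.2 hz)
  refine ((hlength.comp x hangle).congr_of_eventuallyEq hf_eq.symm).congr_deriv ?_
  field_simp

lemma mapsTo_segmentHalfAngle_Ioo : MapsTo segmentHalfAngle (Ioo 0 (π / 8)) (Ioo 0 (π / 2)) :=
  fun _ hx => ⟨(bijOn_segmentHalfAngle.mapsTo hx.1).1, segmentHalfAngle_pi_div_eight ▸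
    strictMonoOn_segmentHalfAngle hx.1 (show 0 < π / 8 by positivity) hx.2⟩

lemma mapsTo_segmentHalfAngle_Ioi : MapsTo segmentHalfAngle (Ioi (π / 8)) (Ioo (π / 2) π) :=
  fun x (hx : π / 8 < x) =>
    have hx₀ : 0 < x := lt_trans (by positivity) hx
    ⟨segmentHalfAngle_pi_div_eight ▸
      strictMonoOn_segmentHalfAngle (show 0 < π / 8 by positivity) hx₀ hx,
      (bijOn_segmentHalfAngle.mapsTo hx₀).2⟩

/-- `arc₁` is strictly convex on `[0, π/8)` and strictly concave on `(π/8, ∞)`. -/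
theorem stmt6 (f : ℝ → ℝ) (hf : IsArcOne f) :
    StrictConvexOn ℝ (Set.Ico 0 (Real.pi / 8)) f ∧
    StrictConcaveOn ℝ (Set.Ioi (Real.pi / 8)) f := by
  have hderiv : EqOn ((2 * ·) ∘ sin ∘ segmentHalfAngle) (deriv f) (Ioi 0) :=
    fun x hx => (hf.hasDerivAt hx).deriv.symm
  have hπ : 0 < π / 8 := by positivity
  constructor
  · refine StrictMonoOn.strictConvexOn_of_deriv (convex_Ico 0 _)
      (hf.1.mono Ico_subset_Ici_self) ?_
    rw [interior_Ico]
    refine StrictMonoOn.congr ?_ (hderiv.mono Ioo_subset_Ioi_self)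
    refine (strictMono_mul_left_of_pos two_pos).comp_strictMonoOn
      (strictMonoOn_sin.comp (strictMonoOn_segmentHalfAngle.mono Ioo_subset_Ioi_self) ?_)
    exact mapsTo_segmentHalfAngle_Ioo.mono_right
      (Ioo_subset_Icc_self.trans (Icc_subset_Icc (by linarith) le_rfl))
  · refine StrictAntiOn.strictConcaveOn_of_deriv (convex_Ioi _)
      (hf.1.mono (Ioi_subset_Ici hπ.le)) ?_
    rw [interior_Ioi]
    refine StrictAntiOn.congr ?_ (hderiv.mono (Ioi_subset_Ioi hπ.le))
    refine (strictMono_mul_left_of_pos two_pos).comp_strictAntiOn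
      (strictAntiOn_sin_Icc_pi_div_two_pi.comp_strictMonoOn
        (strictMonoOn_segmentHalfAngle.mono (Ioi_subset_Ioi hπ.le)) ?_)
    exact mapsTo_segmentHalfAngle_Ioi.mono_right Ioo_subset_Icc_self
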